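/- Let σ be a symmetric trilinear form on ℝⁿ (n ≥ 4) with components σ_{ijk}, H^i := Σ_j σ_{jji}, and R̃_{ijkl} := Σ_m (σ_{ikm}σ_{jlm} - σ_{ilm}σ_{jkm}). Then for every orthonormal frame: Σ_{i=1}^2 Σ_{j=3}^4 R̃_{ijij} - 2R̃₁₂₃₄ ≥ (2/3)[ Σ_{i=1}^4 Σ_{j=1}^n R̃_{ijij} - ((n-3)/(3n-8)) Σ_k (H^k)² ]. -/
import Mathlib


set_option maxHeartbeats 1000000





lemma aux2 (N c S t Pen : ℝ) (hN : 4 ≤ N) (hc : c * (3 * N - 8) = N - 3)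
    (hPen : 0 ≤ Pen) (hCS : t ^ 2 ≤ (N - 4) * Pen) :
    0 ≤ -(1/4) * S ^ 2 - S * t + c * (S + t) ^ 2 + Pen := by
  have h8 : (0:ℝ) < 3 * N - 8 := by linarith
  rcases eq_or_lt_of_le hN with h4 | h4
  · have ht : t = 0 := by nlinarith [sq_nonneg t]
    have hc' : c = 1/4 := by nlinarith
    rw [ht, hc']
    nlinarith
  · have key : 4 * (3 * N - 8) * (N - 4) * (-(1/4) * S ^ 2 - S * t + c * (S + t) ^ 2 + Pen)
        = (2 * (N - 2) * t - (N - 4) * S) ^ 2 + 4 * (3 * N - 8) * ((N - 4) * Pen - t ^ 2) := by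
      linear_combination (4 * (N - 4) * (S + t) ^ 2) * hc
    have hM : (0:ℝ) < 4 * (3 * N - 8) * (N - 4) := by nlinarith
    have h1 : 4 * (3 * N - 8) * (N - 4) * 0 ≤ 4 * (3 * N - 8) * (N - 4) *
        (-(1/4) * S ^ 2 - S * t + c * (S + t) ^ 2 + Pen) := by
      rw [key, mul_zero]
      nlinarith [sq_nonneg (2 * (N - 2) * t - (N - 4) * S)]
    exact le_of_mul_le_mul_left h1 hM

lemma aux3 (N c y0 y1 y2 y3 x01 x02 x03 x12 x13 x23 T B : ℝ) (hN : 5 ≤ N)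
    (hc : c * (3 * N - 8) = N - 3) (hB : 0 ≤ B) :
    0 ≤ (3/2) * ((y0 + y1) * (y2 + y3) - (x02 + x13) ^ 2 - (x03 - x12) ^ 2)
      - (y0 + y1 + y2 + y3) * (y0 + y1 + y2 + y3 + T)
      + c * (y0 + y1 + y2 + y3 + T) ^ 2
      + 2 * (y0 ^ 2 + y1 ^ 2 + y2 ^ 2 + y3 ^ 2)
      + 4 * (x01 ^ 2 + x02 ^ 2 + x03 ^ 2 + x12 ^ 2 + x13 ^ 2 + x23 ^ 2) + B := by
  have h8 : (0:ℝ) < 3 * N - 8 := by linarith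
  have key : 4 * (N - 3) * (3 * N - 8) *
      ((3/2) * ((y0 + y1) * (y2 + y3) - (x02 + x13) ^ 2 - (x03 - x12) ^ 2)
      - (y0 + y1 + y2 + y3) * (y0 + y1 + y2 + y3 + T)
      + c * (y0 + y1 + y2 + y3 + T) ^ 2
      + 2 * (y0 ^ 2 + y1 ^ 2 + y2 ^ 2 + y3 ^ 2)
      + 4 * (x01 ^ 2 + x02 ^ 2 + x03 ^ 2 + x12 ^ 2 + x13 ^ 2 + x23 ^ 2))
      = (2 * (N - 3) * T + (2 - N) * (y0 + y1 + y2 + y3)) ^ 2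
        + (3 * N - 8) * ((N - 5) * ((y0 + y1) ^ 2 + (y2 + y3) ^ 2)
            + ((y0 + y1) - (y2 + y3)) ^ 2)
        + 4 * (N - 3) * (3 * N - 8) * ((y0 - y1) ^ 2 + (y2 - y3) ^ 2
          + (3/2) * (x02 - x13) ^ 2 + x02 ^ 2 + x13 ^ 2
          + (3/2) * (x03 + x12) ^ 2 + x03 ^ 2 + x12 ^ 2 + 4 * x01 ^ 2 + 4 * x23 ^ 2) := by
    linear_combination (4 * (N - 3) * (y0 + y1 + y2 + y3 + T) ^ 2) * hc
  have hM : (0:ℝ) < 4 * (N - 3) * (3 * N - 8) := by nlinarith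
  have h1 : 4 * (N - 3) * (3 * N - 8) * 0 ≤ 4 * (N - 3) * (3 * N - 8) *
      ((3/2) * ((y0 + y1) * (y2 + y3) - (x02 + x13) ^ 2 - (x03 - x12) ^ 2)
      - (y0 + y1 + y2 + y3) * (y0 + y1 + y2 + y3 + T)
      + c * (y0 + y1 + y2 + y3 + T) ^ 2
      + 2 * (y0 ^ 2 + y1 ^ 2 + y2 ^ 2 + y3 ^ 2)
      + 4 * (x01 ^ 2 + x02 ^ 2 + x03 ^ 2 + x12 ^ 2 + x13 ^ 2 + x23 ^ 2)) := by
    rw [key, mul_zero]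
    have s1 := sq_nonneg (2 * (N - 3) * T + (2 - N) * (y0 + y1 + y2 + y3))
    have s2 : (0:ℝ) ≤ (N - 5) * ((y0 + y1) ^ 2 + (y2 + y3) ^ 2) :=
      mul_nonneg (by linarith) (by positivity)
    have s3 : (0:ℝ) ≤ (y0 - y1) ^ 2 + (y2 - y3) ^ 2
          + (3/2) * (x02 - x13) ^ 2 + x02 ^ 2 + x13 ^ 2
          + (3/2) * (x03 + x12) ^ 2 + x03 ^ 2 + x12 ^ 2 + 4 * x01 ^ 2 + 4 * x23 ^ 2 := by
      positivity
    nlinarith [sq_nonneg ((y0 + y1) - (y2 + y3))]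
  have h0 := le_of_mul_le_mul_left h1 hM
  linarith

namespace Stmt4Proof

variable {n : ℕ}

def P4 (n : ℕ) : Finset (Fin n) := Finset.univ.filter (fun i : Fin n => (i : ℕ) < 4)
def Pc (n : ℕ) : Finset (Fin n) := Finset.univ.filter (fun i : Fin n => ¬ (i : ℕ) < 4)

noncomputable def Sd (f : Fin n → Fin n → Fin n → ℝ) (m : Fin n) : ℝ := ∑ i ∈ P4 n, f i i m
noncomputable def Hs (f : Fin n → Fin n → Fin n → ℝ) (m : Fin n) : ℝ := ∑ j, f j j m
noncomputable def Qs (f : Fin n → Fin n → Fin n → ℝ) (m : Fin n) : ℝ := ∑ i ∈ P4 n, ∑ j, (f i j m) ^ 2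
noncomputable def Qc (f : Fin n → Fin n → Fin n → ℝ) (m : Fin n) : ℝ := ∑ a ∈ P4 n, ∑ b ∈ P4 n, (f a b m) ^ 2
noncomputable def R1 (f : Fin n → Fin n → Fin n → ℝ) (m : Fin n) : ℝ := ∑ a ∈ P4 n, ∑ b ∈ Pc n, (f a b m) ^ 2
noncomputable def ts (f : Fin n → Fin n → Fin n → ℝ) (m : Fin n) : ℝ := ∑ j ∈ Pc n, f j j m
noncomputable def Pen (f : Fin n → Fin n → Fin n → ℝ) (m : Fin n) : ℝ := ∑ j ∈ Pc n, (f j j m) ^ 2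
noncomputable def Dg (f : Fin n → Fin n → Fin n → ℝ) (m : Fin n) : ℝ := ∑ a ∈ P4 n, (f a m m) ^ 2

noncomputable def A4 (f : Fin n → Fin n → Fin n → ℝ) (i₁ i₂ i₃ i₄ m : Fin n) : ℝ :=
  (f i₁ i₁ m + f i₂ i₂ m) * (f i₃ i₃ m + f i₄ i₄ m)
    - (f i₁ i₃ m + f i₂ i₄ m) ^ 2 - (f i₁ i₄ m - f i₂ i₃ m) ^ 2

noncomputable def g (f : Fin n → Fin n → Fin n → ℝ) (c : ℝ) (i₁ i₂ i₃ i₄ m : Fin n) : ℝ :=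
  (3/2) * A4 f i₁ i₂ i₃ i₄ m - Sd f m * Hs f m + Qs f m + c * (Hs f m) ^ 2

noncomputable def X1 (f : Fin n → Fin n → Fin n → ℝ) (i₁ i₂ i₃ i₄ m : Fin n) : ℝ :=
  (3/2) * A4 f i₁ i₂ i₃ i₄ m - (3/4) * (Sd f m) ^ 2 + Qc f m

noncomputable def X2 (f : Fin n → Fin n → Fin n → ℝ) (c : ℝ) (m : Fin n) : ℝ :=
  -(1/4) * (Sd f m) ^ 2 - Sd f m * ts f m + c * (Sd f m + ts f m) ^ 2 + Pen f m

noncomputable def X3 (f : Fin n → Fin n → Fin n → ℝ) (c : ℝ) (i₁ i₂ i₃ i₄ m : Fin n) : ℝ :=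
  g f c i₁ i₂ i₃ i₄ m + Qc f m - Dg f m

lemma hHsplit (f : Fin n → Fin n → Fin n → ℝ) (m : Fin n) : Sd f m + ts f m = Hs f m :=
  Finset.sum_filter_add_sum_filter_not Finset.univ _ _

lemma hQsplit (f : Fin n → Fin n → Fin n → ℝ) (m : Fin n) : Qs f m = Qc f m + R1 f m := by
  unfold Qs Qc R1
  rw [← Finset.sum_add_distrib]
  exact Finset.sum_congr rfl fun a _ =>
    (Finset.sum_filter_add_sum_filter_not Finset.univ _ _).symm

lemma keyB (f : Fin n → Fin n → Fin n → ℝ) (h12 : ∀ i j k, f i j k = f j i k) :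
    ∑ i ∈ P4 n, ∑ j, ∑ m, (f i i m * f j j m - f i j m * f j i m)
      = ∑ m, (Sd f m * Hs f m - Qs f m) := by
  calc ∑ i ∈ P4 n, ∑ j, ∑ m, (f i i m * f j j m - f i j m * f j i m)
      = ∑ i ∈ P4 n, ∑ j, ∑ m, (f i i m * f j j m - (f i j m) ^ 2) :=
        Finset.sum_congr rfl fun i _ => Finset.sum_congr rfl fun j _ =>
          Finset.sum_congr rfl fun m _ => by rw [h12 j i m]; ring
    _ = ∑ i ∈ P4 n, ∑ m, ∑ j, (f i i m * f j j m - (f i j m) ^ 2) :=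
        Finset.sum_congr rfl fun i _ => Finset.sum_comm
    _ = ∑ m, ∑ i ∈ P4 n, ∑ j, (f i i m * f j j m - (f i j m) ^ 2) := Finset.sum_comm
    _ = ∑ m, (Sd f m * Hs f m - Qs f m) := by
        refine Finset.sum_congr rfl fun m _ => ?_
        unfold Sd Hs Qs
        simp only [Finset.sum_sub_distrib]
        rw [Finset.sum_mul_sum]

lemma transfer1 (f : Fin n → Fin n → Fin n → ℝ) (h23 : ∀ i j k, f i j k = f i k j) :
    ∑ m ∈ P4 n, R1 f m = ∑ m ∈ Pc n, Qc f m := by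
  unfold R1 Qc
  calc ∑ m ∈ P4 n, ∑ a ∈ P4 n, ∑ b ∈ Pc n, (f a b m) ^ 2
      = ∑ m ∈ P4 n, ∑ a ∈ P4 n, ∑ b ∈ Pc n, (f a m b) ^ 2 :=
        Finset.sum_congr rfl fun m _ => Finset.sum_congr rfl fun a _ =>
          Finset.sum_congr rfl fun b _ => by rw [h23 a b m]
    _ = ∑ m ∈ P4 n, ∑ b ∈ Pc n, ∑ a ∈ P4 n, (f a m b) ^ 2 :=
        Finset.sum_congr rfl fun m _ => Finset.sum_comm
    _ = ∑ b ∈ Pc n, ∑ m ∈ P4 n, ∑ a ∈ P4 n, (f a m b) ^ 2 := Finset.sum_comm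
    _ = ∑ m ∈ Pc n, ∑ a ∈ P4 n, ∑ b ∈ P4 n, (f a b m) ^ 2 :=
        Finset.sum_congr rfl fun b _ => Finset.sum_comm

lemma transfer2 (f : Fin n → Fin n → Fin n → ℝ) (h12 : ∀ i j k, f i j k = f j i k)
    (h23 : ∀ i j k, f i j k = f i k j) :
    ∑ m ∈ P4 n, Pen f m = ∑ m ∈ Pc n, Dg f m := by
  unfold Pen Dg
  calc ∑ m ∈ P4 n, ∑ j ∈ Pc n, (f j j m) ^ 2
      = ∑ m ∈ P4 n, ∑ j ∈ Pc n, (f m j j) ^ 2 :=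
        Finset.sum_congr rfl fun m _ => Finset.sum_congr rfl fun j _ => by
          rw [(h23 j j m).trans (h12 j m j)]
    _ = ∑ j ∈ Pc n, ∑ m ∈ P4 n, (f m j j) ^ 2 := Finset.sum_comm
    _ = ∑ m ∈ Pc n, ∑ a ∈ P4 n, (f a m m) ^ 2 := rfl



lemma gsplit4 (f : Fin n → Fin n → Fin n → ℝ) (c : ℝ) (i₁ i₂ i₃ i₄ m : Fin n) :
    g f c i₁ i₂ i₃ i₄ m = X1 f i₁ i₂ i₃ i₄ m + X2 f c m + (R1 f m - Pen f m) := by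
  unfold g X1 X2
  rw [hQsplit, ← hHsplit]
  ring

lemma decomp (f : Fin n → Fin n → Fin n → ℝ) (c : ℝ)
    (h12 : ∀ i j k, f i j k = f j i k) (h23 : ∀ i j k, f i j k = f i k j)
    (i₁ i₂ i₃ i₄ : Fin n) :
    ∑ m, g f c i₁ i₂ i₃ i₄ m
      = ∑ m ∈ P4 n, (X1 f i₁ i₂ i₃ i₄ m + X2 f c m) + ∑ m ∈ Pc n, X3 f c i₁ i₂ i₃ i₄ m := by
  have split : ∑ m ∈ P4 n, g f c i₁ i₂ i₃ i₄ m + ∑ m ∈ Pc n, g f c i₁ i₂ i₃ i₄ m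
      = ∑ m, g f c i₁ i₂ i₃ i₄ m :=
    Finset.sum_filter_add_sum_filter_not Finset.univ _ _
  have e1 : ∑ m ∈ P4 n, g f c i₁ i₂ i₃ i₄ m
      = ∑ m ∈ P4 n, (X1 f i₁ i₂ i₃ i₄ m + X2 f c m) + (∑ m ∈ P4 n, R1 f m - ∑ m ∈ P4 n, Pen f m) := by
    rw [← Finset.sum_sub_distrib, ← Finset.sum_add_distrib]
    exact Finset.sum_congr rfl fun m _ => gsplit4 f c i₁ i₂ i₃ i₄ m
  have e2 : ∑ m ∈ Pc n, X3 f c i₁ i₂ i₃ i₄ m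
      = ∑ m ∈ Pc n, g f c i₁ i₂ i₃ i₄ m + (∑ m ∈ Pc n, Qc f m - ∑ m ∈ Pc n, Dg f m) := by
    rw [← Finset.sum_sub_distrib, ← Finset.sum_add_distrib]
    exact Finset.sum_congr rfl fun m _ => by unfold X3; ring
  have t1 := transfer1 f h23
  have t2 := transfer2 f h12 h23
  linarith [split, e1, e2, t1, t2]



lemma hP4eq (i₁ i₂ i₃ i₄ : Fin n) (e1 : (i₁ : ℕ) = 0) (e2 : (i₂ : ℕ) = 1)
    (e3 : (i₃ : ℕ) = 2) (e4 : (i₄ : ℕ) = 3) :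
    P4 n = {i₁, i₂, i₃, i₄} := by
  ext i
  simp only [P4, Finset.mem_filter, Finset.mem_univ, true_and, Finset.mem_insert,
    Finset.mem_singleton, Fin.ext_iff, e1, e2, e3, e4]
  omega

lemma hsum4 (i₁ i₂ i₃ i₄ : Fin n) (e1 : (i₁ : ℕ) = 0) (e2 : (i₂ : ℕ) = 1)
    (e3 : (i₃ : ℕ) = 2) (e4 : (i₄ : ℕ) = 3) (F : Fin n → ℝ) :
    ∑ i ∈ P4 n, F i = F i₁ + F i₂ + F i₃ + F i₄ := by
  rw [hP4eq i₁ i₂ i₃ i₄ e1 e2 e3 e4]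
  rw [Finset.sum_insert (by simp [Fin.ext_iff, e1, e2, e3, e4]),
    Finset.sum_insert (by simp [Fin.ext_iff, e2, e3, e4]),
    Finset.sum_insert (by simp [Fin.ext_iff, e3, e4]), Finset.sum_singleton]
  ring

lemma cardPc (hn : 4 ≤ n) (i₁ i₂ i₃ i₄ : Fin n) (e1 : (i₁ : ℕ) = 0) (e2 : (i₂ : ℕ) = 1)
    (e3 : (i₃ : ℕ) = 2) (e4 : (i₄ : ℕ) = 3) : (Pc n).card = n - 4 := by
  have h4 : (P4 n).card = 4 := by
    rw [hP4eq i₁ i₂ i₃ i₄ e1 e2 e3 e4]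
    rw [Finset.card_insert_of_notMem (by simp [Fin.ext_iff, e1, e2, e3, e4]),
      Finset.card_insert_of_notMem (by simp [Fin.ext_iff, e2, e3, e4]),
      Finset.card_insert_of_notMem (by simp [Fin.ext_iff, e3, e4]), Finset.card_singleton]
  have := Finset.card_filter_add_card_filter_not (s := (Finset.univ : Finset (Fin n)))
    (p := fun i : Fin n => (i : ℕ) < 4)
  rw [Finset.card_univ, Fintype.card_fin] at this
  unfold P4 at h4
  unfold Pc
  omega

lemma X2nonneg (hn : 4 ≤ n) (f : Fin n → Fin n → Fin n → ℝ) (c : ℝ)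
    (hc : c * (3 * (n : ℝ) - 8) = (n : ℝ) - 3)
    (i₁ i₂ i₃ i₄ : Fin n) (e1 : (i₁ : ℕ) = 0) (e2 : (i₂ : ℕ) = 1)
    (e3 : (i₃ : ℕ) = 2) (e4 : (i₄ : ℕ) = 3) (m : Fin n) :
    0 ≤ X2 f c m := by
  have hN : (4 : ℝ) ≤ (n : ℝ) := by exact_mod_cast hn
  have hPen : 0 ≤ Pen f m := Finset.sum_nonneg fun j _ => sq_nonneg _
  have hCS : (ts f m) ^ 2 ≤ ((n : ℝ) - 4) * Pen f m := by
    have h := sq_sum_le_card_mul_sum_sq (s := Pc n) (f := fun j => f j j m)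
    have hcard : ((Pc n).card : ℝ) = (n : ℝ) - 4 := by
      rw [cardPc hn i₁ i₂ i₃ i₄ e1 e2 e3 e4]
      have : ((n - 4 : ℕ) : ℝ) = (n : ℝ) - 4 := by
        have := Nat.cast_sub (R := ℝ) hn
        simpa using this
      rw [this]
    unfold ts Pen
    calc (∑ j ∈ Pc n, f j j m) ^ 2 ≤ ((Pc n).card : ℝ) * ∑ j ∈ Pc n, (f j j m) ^ 2 := by
          exact_mod_cast h
      _ = ((n : ℝ) - 4) * ∑ j ∈ Pc n, (f j j m) ^ 2 := by rw [hcard]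
  exact aux2 (n : ℝ) c (Sd f m) (ts f m) (Pen f m) hN hc hPen hCS


lemma X1nonneg (f : Fin n → Fin n → Fin n → ℝ)
    (h12 : ∀ i j k, f i j k = f j i k) (h23 : ∀ i j k, f i j k = f i k j)
    (i₁ i₂ i₃ i₄ : Fin n) (e1 : (i₁ : ℕ) = 0) (e2 : (i₂ : ℕ) = 1)
    (e3 : (i₃ : ℕ) = 2) (e4 : (i₄ : ℕ) = 3) :
    0 ≤ ∑ m ∈ P4 n, X1 f i₁ i₂ i₃ i₄ m := by
  have h13 : ∀ i j k, f i j k = f k j i := fun i j k => by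
    rw [h12, h23, h12]
  have hs4 := hsum4 i₁ i₂ i₃ i₄ e1 e2 e3 e4
  have hc121 : f i₁ i₂ i₁ = f i₁ i₁ i₂ := (h23 i₁ i₂ i₁)
  have hc131 : f i₁ i₃ i₁ = f i₁ i₁ i₃ := (h23 i₁ i₃ i₁)
  have hc132 : f i₁ i₃ i₂ = f i₁ i₂ i₃ := (h23 i₁ i₃ i₂)
  have hc141 : f i₁ i₄ i₁ = f i₁ i₁ i₄ := (h23 i₁ i₄ i₁)
  have hc142 : f i₁ i₄ i₂ = f i₁ i₂ i₄ := (h23 i₁ i₄ i₂)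
  have hc143 : f i₁ i₄ i₃ = f i₁ i₃ i₄ := (h23 i₁ i₄ i₃)
  have hc211 : f i₂ i₁ i₁ = f i₁ i₁ i₂ := ((h12 i₂ i₁ i₁).trans (h23 i₁ i₂ i₁))
  have hc212 : f i₂ i₁ i₂ = f i₁ i₂ i₂ := (h12 i₂ i₁ i₂)
  have hc213 : f i₂ i₁ i₃ = f i₁ i₂ i₃ := (h12 i₂ i₁ i₃)
  have hc214 : f i₂ i₁ i₄ = f i₁ i₂ i₄ := (h12 i₂ i₁ i₄)
  have hc221 : f i₂ i₂ i₁ = f i₁ i₂ i₂ := ((h23 i₂ i₂ i₁).trans (h12 i₂ i₁ i₂))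
  have hc231 : f i₂ i₃ i₁ = f i₁ i₂ i₃ := ((h23 i₂ i₃ i₁).trans (h12 i₂ i₁ i₃))
  have hc232 : f i₂ i₃ i₂ = f i₂ i₂ i₃ := (h23 i₂ i₃ i₂)
  have hc241 : f i₂ i₄ i₁ = f i₁ i₂ i₄ := ((h23 i₂ i₄ i₁).trans (h12 i₂ i₁ i₄))
  have hc242 : f i₂ i₄ i₂ = f i₂ i₂ i₄ := (h23 i₂ i₄ i₂)
  have hc243 : f i₂ i₄ i₃ = f i₂ i₃ i₄ := (h23 i₂ i₄ i₃)
  have hc311 : f i₃ i₁ i₁ = f i₁ i₁ i₃ := ((h12 i₃ i₁ i₁).trans (h23 i₁ i₃ i₁))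
  have hc312 : f i₃ i₁ i₂ = f i₁ i₂ i₃ := ((h12 i₃ i₁ i₂).trans (h23 i₁ i₃ i₂))
  have hc313 : f i₃ i₁ i₃ = f i₁ i₃ i₃ := (h12 i₃ i₁ i₃)
  have hc314 : f i₃ i₁ i₄ = f i₁ i₃ i₄ := (h12 i₃ i₁ i₄)
  have hc321 : f i₃ i₂ i₁ = f i₁ i₂ i₃ := (((h12 i₃ i₂ i₁).trans (h23 i₂ i₃ i₁)).trans (h12 i₂ i₁ i₃))
  have hc322 : f i₃ i₂ i₂ = f i₂ i₂ i₃ := ((h12 i₃ i₂ i₂).trans (h23 i₂ i₃ i₂))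
  have hc323 : f i₃ i₂ i₃ = f i₂ i₃ i₃ := (h12 i₃ i₂ i₃)
  have hc324 : f i₃ i₂ i₄ = f i₂ i₃ i₄ := (h12 i₃ i₂ i₄)
  have hc331 : f i₃ i₃ i₁ = f i₁ i₃ i₃ := ((h23 i₃ i₃ i₁).trans (h12 i₃ i₁ i₃))
  have hc332 : f i₃ i₃ i₂ = f i₂ i₃ i₃ := ((h23 i₃ i₃ i₂).trans (h12 i₃ i₂ i₃))
  have hc341 : f i₃ i₄ i₁ = f i₁ i₃ i₄ := ((h23 i₃ i₄ i₁).trans (h12 i₃ i₁ i₄))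
  have hc342 : f i₃ i₄ i₂ = f i₂ i₃ i₄ := ((h23 i₃ i₄ i₂).trans (h12 i₃ i₂ i₄))
  have hc343 : f i₃ i₄ i₃ = f i₃ i₃ i₄ := (h23 i₃ i₄ i₃)
  have hc411 : f i₄ i₁ i₁ = f i₁ i₁ i₄ := ((h12 i₄ i₁ i₁).trans (h23 i₁ i₄ i₁))
  have hc412 : f i₄ i₁ i₂ = f i₁ i₂ i₄ := ((h12 i₄ i₁ i₂).trans (h23 i₁ i₄ i₂))
  have hc413 : f i₄ i₁ i₃ = f i₁ i₃ i₄ := ((h12 i₄ i₁ i₃).trans (h23 i₁ i₄ i₃))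
  have hc414 : f i₄ i₁ i₄ = f i₁ i₄ i₄ := (h12 i₄ i₁ i₄)
  have hc421 : f i₄ i₂ i₁ = f i₁ i₂ i₄ := (((h12 i₄ i₂ i₁).trans (h23 i₂ i₄ i₁)).trans (h12 i₂ i₁ i₄))
  have hc422 : f i₄ i₂ i₂ = f i₂ i₂ i₄ := ((h12 i₄ i₂ i₂).trans (h23 i₂ i₄ i₂))
  have hc423 : f i₄ i₂ i₃ = f i₂ i₃ i₄ := ((h12 i₄ i₂ i₃).trans (h23 i₂ i₄ i₃))
  have hc424 : f i₄ i₂ i₄ = f i₂ i₄ i₄ := (h12 i₄ i₂ i₄)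
  have hc431 : f i₄ i₃ i₁ = f i₁ i₃ i₄ := (((h12 i₄ i₃ i₁).trans (h23 i₃ i₄ i₁)).trans (h12 i₃ i₁ i₄))
  have hc432 : f i₄ i₃ i₂ = f i₂ i₃ i₄ := (((h12 i₄ i₃ i₂).trans (h23 i₃ i₄ i₂)).trans (h12 i₃ i₂ i₄))
  have hc433 : f i₄ i₃ i₃ = f i₃ i₃ i₄ := ((h12 i₄ i₃ i₃).trans (h23 i₃ i₄ i₃))
  have hc434 : f i₄ i₃ i₄ = f i₃ i₄ i₄ := (h12 i₄ i₃ i₄)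
  have hc441 : f i₄ i₄ i₁ = f i₁ i₄ i₄ := ((h23 i₄ i₄ i₁).trans (h12 i₄ i₁ i₄))
  have hc442 : f i₄ i₄ i₂ = f i₂ i₄ i₄ := ((h23 i₄ i₄ i₂).trans (h12 i₄ i₂ i₄))
  have hc443 : f i₄ i₄ i₃ = f i₃ i₄ i₄ := ((h23 i₄ i₄ i₃).trans (h12 i₄ i₃ i₄))
  unfold X1 A4 Sd Qc
  have hEq : ∑ m ∈ P4 n, ((3/2) * ((f i₁ i₁ m + f i₂ i₂ m) * (f i₃ i₃ m + f i₄ i₄ m)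
        - (f i₁ i₃ m + f i₂ i₄ m) ^ 2 - (f i₁ i₄ m - f i₂ i₃ m) ^ 2)
      - (3/4) * (∑ i ∈ P4 n, f i i m) ^ 2 + ∑ a ∈ P4 n, ∑ b ∈ P4 n, (f a b m) ^ 2)
      = (1/4) * (f i₁ i₁ i₁ - 3 * f i₂ i₂ i₁) ^ 2
      + (1/4) * (3 * f i₁ i₁ i₂ - f i₂ i₂ i₂) ^ 2
      + (1/4) * (f i₃ i₃ i₃ - 3 * f i₄ i₄ i₃) ^ 2
      + (1/4) * (3 * f i₃ i₃ i₄ - f i₄ i₄ i₄) ^ 2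
      + (3/4) * (f i₁ i₁ i₃ - f i₂ i₂ i₃ - 2 * f i₁ i₂ i₄) ^ 2
      + (3/4) * (f i₁ i₁ i₄ - f i₂ i₂ i₄ + 2 * f i₁ i₂ i₃) ^ 2
      + (3/4) * (f i₃ i₃ i₁ - f i₄ i₄ i₁ - 2 * f i₂ i₃ i₄) ^ 2
      + (3/4) * (f i₃ i₃ i₂ - f i₄ i₄ i₂ + 2 * f i₁ i₃ i₄) ^ 2 := by
    simp only [hs4]
    simp only [hc121, hc131, hc132, hc141, hc142, hc143, hc211, hc212, hc213, hc214, hc221, hc231, hc232, hc241, hc242, hc243, hc311, hc312, hc313, hc314, hc321, hc322, hc323, hc324, hc331, hc332, hc341, hc342, hc343, hc411, hc412, hc413, hc414, hc421, hc422, hc423, hc424, hc431, hc432, hc433, hc434, hc441, hc442, hc443]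
    ring
  rw [hEq]
  positivity

lemma X3nonneg (f : Fin n → Fin n → Fin n → ℝ) (c : ℝ)
    (hc : c * (3 * (n : ℝ) - 8) = (n : ℝ) - 3)
    (h12 : ∀ i j k, f i j k = f j i k) (h23 : ∀ i j k, f i j k = f i k j)
    (i₁ i₂ i₃ i₄ : Fin n) (e1 : (i₁ : ℕ) = 0) (e2 : (i₂ : ℕ) = 1)
    (e3 : (i₃ : ℕ) = 2) (e4 : (i₄ : ℕ) = 3) (m : Fin n) (hm : m ∈ Pc n) :
    0 ≤ X3 f c i₁ i₂ i₃ i₄ m := by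
  have hm4 : 4 ≤ (m : ℕ) := by
    have := hm
    simp only [Pc, Finset.mem_filter, Finset.mem_univ, true_and, not_lt] at this
    exact this
  have hn5 : 5 ≤ n := by have := m.isLt; omega
  have hN5 : (5 : ℝ) ≤ (n : ℝ) := by exact_mod_cast hn5
  have hs4 := hsum4 i₁ i₂ i₃ i₄ e1 e2 e3 e4
  have hR1 : R1 f m = (∑ a ∈ P4 n, ∑ b ∈ (Pc n).erase m, (f a b m) ^ 2) + Dg f m := by
    unfold R1 Dg
    rw [← Finset.sum_add_distrib]
    exact Finset.sum_congr rfl fun a _ => (Finset.sum_erase_add (Pc n) _ hm).symm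
  have hB : 0 ≤ ∑ b ∈ (Pc n).erase m, (f i₁ b m) ^ 2 + ∑ b ∈ (Pc n).erase m, (f i₂ b m) ^ 2
      + ∑ b ∈ (Pc n).erase m, (f i₃ b m) ^ 2 + ∑ b ∈ (Pc n).erase m, (f i₄ b m) ^ 2 := by
    have h1 : ∀ (a : Fin n), 0 ≤ ∑ b ∈ (Pc n).erase m, (f a b m) ^ 2 :=
      fun a => Finset.sum_nonneg fun b _ => sq_nonneg _
    have := h1 i₁; have := h1 i₂; have := h1 i₃; have := h1 i₄
    linarith
  unfold X3 g
  rw [hQsplit, hR1, ← hHsplit]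
  unfold A4 Sd Qc
  simp only [hs4]
  simp only [h12 i₂ i₁ m, h12 i₃ i₁ m, h12 i₃ i₂ m, h12 i₄ i₁ m, h12 i₄ i₂ m, h12 i₄ i₃ m]
  have h3 := aux3 (n : ℝ) c (f i₁ i₁ m) (f i₂ i₂ m) (f i₃ i₃ m) (f i₄ i₄ m)
    (f i₁ i₂ m) (f i₁ i₃ m) (f i₁ i₄ m) (f i₂ i₃ m) (f i₂ i₄ m) (f i₃ i₄ m)
    (ts f m) (∑ b ∈ (Pc n).erase m, (f i₁ b m) ^ 2 + ∑ b ∈ (Pc n).erase m, (f i₂ b m) ^ 2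
      + ∑ b ∈ (Pc n).erase m, (f i₃ b m) ^ 2 + ∑ b ∈ (Pc n).erase m, (f i₄ b m) ^ 2) hN5 hc hB
  linarith


theorem mainineq (hn : 4 ≤ n) (f : Fin n → Fin n → Fin n → ℝ)
    (h12 : ∀ i j k, f i j k = f j i k) (h23 : ∀ i j k, f i j k = f i k j)
    (i₁ i₂ i₃ i₄ : Fin n) (e1 : (i₁ : ℕ) = 0) (e2 : (i₂ : ℕ) = 1)
    (e3 : (i₃ : ℕ) = 2) (e4 : (i₄ : ℕ) = 3) :
    (2 / 3 : ℝ) * ((∑ i ∈ Finset.univ.filter (fun i : Fin n => (i : ℕ) < 4),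
          ∑ j, ∑ m, (f i i m * f j j m - f i j m * f j i m))
        - (((n : ℝ) - 3) / (3 * (n : ℝ) - 8)) * ∑ k, (∑ j, f j j k) ^ 2)
      ≤ ((∑ m, (f i₁ i₁ m * f i₃ i₃ m - f i₁ i₃ m * f i₃ i₁ m))
          + (∑ m, (f i₁ i₁ m * f i₄ i₄ m - f i₁ i₄ m * f i₄ i₁ m))
          + (∑ m, (f i₂ i₂ m * f i₃ i₃ m - f i₂ i₃ m * f i₃ i₂ m))
          + (∑ m, (f i₂ i₂ m * f i₄ i₄ m - f i₂ i₄ m * f i₄ i₂ m)))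
        - 2 * (∑ m, (f i₁ i₃ m * f i₂ i₄ m - f i₁ i₄ m * f i₂ i₃ m)) := by
  have hN : (4 : ℝ) ≤ (n : ℝ) := by exact_mod_cast hn
  have h8 : (0 : ℝ) < 3 * (n : ℝ) - 8 := by linarith
  set c : ℝ := ((n : ℝ) - 3) / (3 * (n : ℝ) - 8) with hcdef
  have hc : c * (3 * (n : ℝ) - 8) = (n : ℝ) - 3 := div_mul_cancel₀ _ h8.ne'
  have hBB : ∑ i ∈ Finset.univ.filter (fun i : Fin n => (i : ℕ) < 4),
        ∑ j, ∑ m, (f i i m * f j j m - f i j m * f j i m)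
      = ∑ m, (Sd f m * Hs f m - Qs f m) := keyB f h12
  have hHH : (∑ k, (∑ j, f j j k) ^ 2) = ∑ k, (Hs f k) ^ 2 := rfl
  rw [hBB, hHH]
  have key : ((∑ m, (f i₁ i₁ m * f i₃ i₃ m - f i₁ i₃ m * f i₃ i₁ m))
          + (∑ m, (f i₁ i₁ m * f i₄ i₄ m - f i₁ i₄ m * f i₄ i₁ m))
          + (∑ m, (f i₂ i₂ m * f i₃ i₃ m - f i₂ i₃ m * f i₃ i₂ m))
          + (∑ m, (f i₂ i₂ m * f i₄ i₄ m - f i₂ i₄ m * f i₄ i₂ m)))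
        - 2 * (∑ m, (f i₁ i₃ m * f i₂ i₄ m - f i₁ i₄ m * f i₂ i₃ m))
        - (2 / 3 : ℝ) * ((∑ m, (Sd f m * Hs f m - Qs f m)) - c * ∑ k, (Hs f k) ^ 2)
      = (2 / 3 : ℝ) * ∑ m, g f c i₁ i₂ i₃ i₄ m := by
    simp only [Finset.mul_sum, ← Finset.sum_sub_distrib, ← Finset.sum_add_distrib]
    refine Finset.sum_congr rfl fun m _ => ?_
    rw [h12 i₃ i₁ m, h12 i₄ i₁ m, h12 i₃ i₂ m, h12 i₄ i₂ m]
    unfold g A4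
    ring
  have hpos : 0 ≤ ∑ m, g f c i₁ i₂ i₃ i₄ m := by
    rw [decomp f c h12 h23 i₁ i₂ i₃ i₄]
    have hadd : ∑ m ∈ P4 n, (X1 f i₁ i₂ i₃ i₄ m + X2 f c m)
        = ∑ m ∈ P4 n, X1 f i₁ i₂ i₃ i₄ m + ∑ m ∈ P4 n, X2 f c m :=
      Finset.sum_add_distrib
    have h1 := X1nonneg f h12 h23 i₁ i₂ i₃ i₄ e1 e2 e3 e4
    have h2 : 0 ≤ ∑ m ∈ P4 n, X2 f c m :=
      Finset.sum_nonneg fun m _ => X2nonneg hn f c hc i₁ i₂ i₃ i₄ e1 e2 e3 e4 m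
    have h3 : 0 ≤ ∑ m ∈ Pc n, X3 f c i₁ i₂ i₃ i₄ m :=
      Finset.sum_nonneg fun m hm => X3nonneg f c hc h12 h23 i₁ i₂ i₃ i₄ e1 e2 e3 e4 m hm
    linarith
  linarith

end Stmt4Proof



open scoped RealInnerProductSpace

/-- Lemma 3.7: for a symmetric trilinear form `σ` on `ℝⁿ` (`n ≥ 4`),
`Σ_{i=1}^2 Σ_{j=3}^4 R̃_ijij - 2R̃₁₂₃₄
  ≥ (2/3)[Σ_{i=1}^4 Σ_{j=1}^n R̃_ijij - ((n-3)/(3n-8)) Σ (Hᵏ)²]`. -/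
theorem stmt_4 {n : ℕ} (hn : 4 ≤ n)
    (T : EuclideanSpace ℝ (Fin n) →ₗ[ℝ] EuclideanSpace ℝ (Fin n) →ₗ[ℝ]
      EuclideanSpace ℝ (Fin n) →ₗ[ℝ] ℝ)
    (hT1 : ∀ x y z, T x y z = T y x z)
    (hT2 : ∀ x y z, T x y z = T x z y)
    (e : Fin n → EuclideanSpace ℝ (Fin n)) (he : Orthonormal ℝ e) :
    let σ : Fin n → Fin n → Fin n → ℝ := fun i j k => T (e i) (e j) (e k)
    let H : Fin n → ℝ := fun i => ∑ j, σ j j i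
    let Rt : Fin n → Fin n → Fin n → Fin n → ℝ :=
      fun i j k l => ∑ m, (σ i k m * σ j l m - σ i l m * σ j k m)
    let i₁ : Fin n := ⟨0, by omega⟩
    let i₂ : Fin n := ⟨1, by omega⟩
    let i₃ : Fin n := ⟨2, by omega⟩
    let i₄ : Fin n := ⟨3, by omega⟩
    (2 / 3 : ℝ) * ((∑ i ∈ Finset.univ.filter (fun i : Fin n => (i : ℕ) < 4),
          ∑ j, Rt i j i j)
        - (((n : ℝ) - 3) / (3 * (n : ℝ) - 8)) * ∑ k, (H k) ^ 2)
      ≤ (Rt i₁ i₃ i₁ i₃ + Rt i₁ i₄ i₁ i₄ + Rt i₂ i₃ i₂ i₃ + Rt i₂ i₄ i₂ i₄)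
        - 2 * Rt i₁ i₂ i₃ i₄ := by
  intro σ H Rt i₁ i₂ i₃ i₄
  exact Stmt4Proof.mainineq hn (fun i j k => T (e i) (e j) (e k))
    (fun i j k => hT1 (e i) (e j) (e k)) (fun i j k => hT2 (e i) (e j) (e k))
    i₁ i₂ i₃ i₄ rfl rfl rfl rfl
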